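/- (Theorem 1, part 3.) Under the DSGCDMM dynamics and the existence of a saddle point, the dual residual of every head machine converges to zero: for every odd k ∈ {1,…,K}, s_k^l → 0 in ℝ^d as l → ∞, where s_1^{l+1} = ρ(ζ_2^{l+1} − ζ_2^l) and s_k^{l+1} = ρ(ζ_{k−1}^{l+1} − ζ_{k−1}^l) + ρ(ζ_{k+1}^{l+1} − ζ_{k+1}^l) for odd k with 1 < k < K. -/

import Mathlib

/-!
DSGCDMM is two-block ADMM in disguise. On the chain `1 - 2 - ⋯ - K` every consensus edge joins
an odd and an even machine, so the augmented Lagrangian splits into independent local problems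
within each parity class: the odd machines jointly perform the `x`-step and the even machines
the `z`-step of ADMM for `min f x + g z` subject to `A x + B z = 0`, where `A`, `B` collect the
node constraints `C⊤ζ_k = 0` and the edge constraints `ζ_e = ζ_{e+1}` of each parity. The
classical Lyapunov argument for ADMM (Boyd et al., Appendix A) then shows that
`‖y - y⋆‖² / (2ρ) + (ρ/2) ‖B (z - z⋆)‖²` decreases by at least `(ρ/2) ‖B (z_{l+1} - z_l)‖²`
per iteration, so `B (z_{l+1} - z_l) → 0`. Since the edge `(k - 1, k)` sees the even machine `k`
through `B` alone, every even machine's increment tends to zero, and the dual residual of an odd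
machine is `ρ` times the increments of its even neighbours.
-/

open Finset Filter Topology
open scoped RealInnerProductSpace

noncomputable section

theorem nonpos_of_forall_le_mul {a b : ℝ} (h : ∀ t : ℝ, 0 < t → t ≤ 1 → a ≤ t * b) : a ≤ 0 := by
  have hlim : Tendsto (fun t : ℝ => t * b) (𝓝[>] 0) (𝓝 0) := by
    have : Tendsto (fun t : ℝ => t * b) (𝓝 0) (𝓝 (0 * b)) := tendsto_id.mul_const b
    simpa using this.mono_left nhdsWithin_le_nhds
  refine ge_of_tendsto hlim ?_
  filter_upwards [Ioc_mem_nhdsGT zero_lt_one] with t ht using h t ht.1 ht.2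

theorem tendsto_zero_of_add_le_of_nonneg {V a : ℕ → ℝ} (hV : ∀ l, 0 ≤ V l) (ha : ∀ l, 0 ≤ a l)
    (h : ∀ l, V (l + 1) + a l ≤ V l) : Tendsto a atTop (𝓝 0) := by
  have hsum : ∀ n, ∑ i ∈ range n, a i + V n ≤ V 0 := by
    intro n
    induction n with
    | zero => simp
    | succ n ih => rw [sum_range_succ]; linarith [h n]
  exact (summable_of_sum_range_le ha fun n => by linarith [hsum n, hV n]).tendsto_atTop_zero

section Convexity

variable {V : Type*} [AddCommGroup V] [Module ℝ V]

theorem convexOn_finsetSum {ι : Type*} {s : Finset ι} {F : ι → V → ℝ}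
    (hF : ∀ i ∈ s, ConvexOn ℝ Set.univ (F i)) : ConvexOn ℝ Set.univ fun v => ∑ i ∈ s, F i v := by
  classical
  induction s using Finset.induction_on with
  | empty => simpa using convexOn_const (0 : ℝ) convex_univ
  | insert i s hi ih =>
    simp only [sum_insert hi]
    exact (hF i (mem_insert_self i s)).add (ih fun j hj => hF j (mem_insert_of_mem hj))

theorem convexOn_norm_sub_sq {F : Type*} [NormedAddCommGroup F] [NormedSpace ℝ F] (y : F)
    (T : V →ₗ[ℝ] F) : ConvexOn ℝ Set.univ fun x => ‖y - T x‖ ^ 2 := by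
  have := ((convexOn_univ_norm.pow (fun _ _ => norm_nonneg _) 2).translate_right y).comp_linearMap
    (-T)
  simpa [Function.comp_def, sub_eq_add_neg] using this

theorem convexOn_lasso {d : ℕ} {F : Type*} [NormedAddCommGroup F] [NormedSpace ℝ F] {c lam : ℝ}
    (hc : 0 ≤ c) (hlam : 0 ≤ lam) (y : F) (T : EuclideanSpace ℝ (Fin d) →ₗ[ℝ] F)
    {ω : Fin d → ℝ} (hω : ∀ j, 0 ≤ ω j) :
    ConvexOn ℝ Set.univ fun x => c * ‖y - T x‖ ^ 2 + lam * ∑ j, ω j * |x j| := by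
  have habs (j : Fin d) :
      ConvexOn ℝ Set.univ fun x : EuclideanSpace ℝ (Fin d) => ω j * |x j| := by
    simpa [Function.comp_def] using (convexOn_univ_norm.comp_linearMap
      (EuclideanSpace.proj (𝕜 := ℝ) j).toLinearMap).smul (hω j)
  exact ((convexOn_norm_sub_sq y T).smul hc).add ((convexOn_finsetSum fun j _ => habs j).smul hlam)

end Convexity

namespace LinearMap.BilinForm

variable {W : Type*} [AddCommGroup W] [Module ℝ W] {β : LinearMap.BilinForm ℝ W}

theorem IsSymm.two_mul_apply_sub_sub (hβ : β.IsSymm) (u v w : W) :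
    2 * β (u - v) (u - w) = β (u - v) (u - v) + β (u - w) (u - w) - β (v - w) (v - w) := by
  rw [show v - w = (u - w) - (u - v) by abel]
  simp only [map_sub, LinearMap.sub_apply]
  rw [hβ.eq v u, hβ.eq w u, hβ.eq w v]
  ring

theorem IsSymm.apply_add_smul_add_smul (hβ : β.IsSymm) (u d : W) (t : ℝ) :
    β (u + t • d) (u + t • d) = β u u + t * (2 * β u d) + t ^ 2 * β d d := by
  simp only [map_add, map_smul, LinearMap.add_apply, LinearMap.smul_apply, smul_eq_mul,
    hβ.eq d u]
  ring

end LinearMap.BilinForm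

section ADMM

variable {V X Z W : Type*} [AddCommGroup V] [Module ℝ V] [AddCommGroup X] [Module ℝ X]
  [AddCommGroup Z] [Module ℝ Z] [AddCommGroup W] [Module ℝ W]
  {β : LinearMap.BilinForm ℝ W} {ρ : ℝ}

theorem ConvexOn.le_add_of_isMinOn_add_quadratic {F : V → ℝ}
    (hF : ConvexOn ℝ Set.univ F) (hβ : β.IsSymm) (T : V →ₗ[ℝ] W) (u w : W) {v₀ : V}
    (hmin : IsMinOn (fun v => F v + β u (T v + w) + ρ / 2 * β (T v + w) (T v + w)) Set.univ v₀)
    (v : V) : F v₀ ≤ F v + β (u + ρ • (T v₀ + w)) (T (v - v₀)) := by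
  set d := T (v - v₀)
  set p := T v₀ + w
  suffices F v₀ - F v - β (u + ρ • p) d ≤ 0 by linarith
  refine nonpos_of_forall_le_mul (b := ρ / 2 * β d d) fun t ht ht1 => ?_
  have hconv : F (v₀ + t • (v - v₀)) ≤ (1 - t) * F v₀ + t * F v := by
    have := hF.2 (Set.mem_univ v₀) (Set.mem_univ v) (by linarith : 0 ≤ 1 - t) ht.le (by ring)
    rwa [show (1 - t) • v₀ + t • v = v₀ + t • (v - v₀) by module] at this
  have hquad : T (v₀ + t • (v - v₀)) + w = p + t • d := by
    simp only [map_add, map_smul, d, p]; abel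
  have hmin' : F v₀ + β u p + ρ / 2 * β p p
      ≤ F (v₀ + t • (v - v₀)) + β u (p + t • d) + ρ / 2 * β (p + t • d) (p + t • d) := by
    simpa only [hquad] using isMinOn_univ_iff.mp hmin (v₀ + t • (v - v₀))
  rw [hβ.apply_add_smul_add_smul] at hmin'
  simp only [map_add, map_smul, LinearMap.add_apply, LinearMap.smul_apply, smul_eq_mul] at hmin' ⊢
  have h' : t * (F v₀ - F v - (β u d + ρ * β p d)) ≤ t * (t * (ρ / 2 * β d d)) := by
    nlinarith
  exact le_of_mul_le_mul_left h' ht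

variable (β ρ) (f : X → ℝ) (g : Z → ℝ) (A : X →ₗ[ℝ] W) (B : Z →ₗ[ℝ] W)

def augLagrangian (x : X) (z : Z) (y : W) : ℝ :=
  f x + g z + β y (A x + B z) + ρ / 2 * β (A x + B z) (A x + B z)

structure IsADMMSeq (x : ℕ → X) (z : ℕ → Z) (y : ℕ → W) : Prop where
  isMinOn_x : ∀ l, IsMinOn (fun x' => augLagrangian β ρ f g A B x' (z l) (y l)) Set.univ (x (l + 1))
  isMinOn_z : ∀ l,
    IsMinOn (fun z' => augLagrangian β ρ f g A B (x (l + 1)) z' (y l)) Set.univ (z (l + 1))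
  dual_eq : ∀ l, y (l + 1) = y l + ρ • (A (x (l + 1)) + B (z (l + 1)))

structure IsSaddlePoint (xs : X) (zs : Z) (ys : W) : Prop where
  feasible : A xs + B zs = 0
  le_lagrangian : ∀ x z, f xs + g zs ≤ f x + g z + β ys (A x + B z)

def admmEnergy (ys : W) (zs : Z) (y : W) (z : Z) : ℝ :=
  (2 * ρ)⁻¹ * β (y - ys) (y - ys) + ρ / 2 * β (B (z - zs)) (B (z - zs))

variable {β ρ f g A B} {x : ℕ → X} {z : ℕ → Z} {y : ℕ → W}

namespace IsADMMSeq

theorem le_add_x (h : IsADMMSeq β ρ f g A B x z y) (hf : ConvexOn ℝ Set.univ f) (hβ : β.IsSymm)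
    (l : ℕ) (x' : X) :
    f (x (l + 1)) ≤ f x' + β (y (l + 1) - ρ • B (z (l + 1) - z l)) (A (x' - x (l + 1))) := by
  have := (hf.add_const (g (z l))).le_add_of_isMinOn_add_quadratic hβ A (y l) (B (z l))
    (h.isMinOn_x l) x'
  rw [show y l + ρ • (A (x (l + 1)) + B (z l)) = y (l + 1) - ρ • B (z (l + 1) - z l) by
    rw [h.dual_eq, map_sub]; module] at this
  simp only [Pi.add_apply] at this
  linarith

theorem le_add_z (h : IsADMMSeq β ρ f g A B x z y) (hg : ConvexOn ℝ Set.univ g) (hβ : β.IsSymm)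
    (l : ℕ) (z' : Z) :
    g (z (l + 1)) ≤ g z' + β (y (l + 1)) (B (z' - z (l + 1))) := by
  have hmin : IsMinOn (fun z' => f (x (l + 1)) + g z' + β (y l) (B z' + A (x (l + 1)))
      + ρ / 2 * β (B z' + A (x (l + 1))) (B z' + A (x (l + 1)))) Set.univ (z (l + 1)) := by
    simpa only [augLagrangian, add_comm (A _)] using h.isMinOn_z l
  have := ((convexOn_const (f (x (l + 1))) convex_univ).add hg).le_add_of_isMinOn_add_quadratic
    hβ B (y l) (A (x (l + 1))) hmin z'
  rw [show y l + ρ • (B (z (l + 1)) + A (x (l + 1))) = y (l + 1) by rw [h.dual_eq]; module]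
    at this
  simp only [Pi.add_apply] at this
  linarith

theorem admmEnergy_add_le (h : IsADMMSeq β ρ f g A B x z y) (hf : ConvexOn ℝ Set.univ f)
    (hg : ConvexOn ℝ Set.univ g) (hβ : β.IsPosSemidef) (hρ : 0 < ρ) {xs : X} {zs : Z} {ys : W}
    (hs : IsSaddlePoint β f g A B xs zs ys) (l : ℕ) :
    admmEnergy β ρ B ys zs (y (l + 2)) (z (l + 2))
        + ρ / 2 * β (B (z (l + 2) - z (l + 1))) (B (z (l + 2) - z (l + 1)))
      ≤ admmEnergy β ρ B ys zs (y (l + 1)) (z (l + 1)) := by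
  have hsymm := hβ.isSymm
  have hx := h.le_add_x hf hsymm (l + 1) xs
  have hz := h.le_add_z hg hsymm (l + 1)
  have hz' := h.le_add_z hg hsymm l (z (l + 2))
  simp only [show l + 1 + 1 = l + 2 from rfl] at hx hz
  have hsaddle := hs.le_lagrangian (x (l + 2)) (z (l + 2))
  have hy : y (l + 2) - y (l + 1) = ρ • (A (x (l + 2)) + B (z (l + 2))) := by
    rw [h.dual_eq (l + 1)]; abel
  have hAxs : A (xs - x (l + 2)) = B (z (l + 2) - zs) - (A (x (l + 2)) + B (z (l + 2))) := by
    rw [map_sub, map_sub, eq_neg_of_add_eq_zero_left hs.feasible]; abel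
  have hcos_y := hsymm.two_mul_apply_sub_sub (y (l + 2)) (y (l + 1)) ys
  have hcos_z := hsymm.two_mul_apply_sub_sub (B (z (l + 2))) (B (z (l + 1))) (B zs)
  rw [hy] at hcos_y
  simp only [map_smul, LinearMap.smul_apply, smul_eq_mul] at hcos_y
  simp only [← map_sub] at hcos_z
  unfold admmEnergy
  set r := A (x (l + 2)) + B (z (l + 2))
  set Δ := B (z (l + 2) - z (l + 1))
  set b := B (z (l + 2) - zs)
  -- monotonicity of `∂g`: the optimality conditions of two consecutive `z`-steps
  have hmono : ρ * β Δ r ≤ 0 := by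
    have h₁ := hz (z (l + 1))
    rw [show z (l + 1) - z (l + 2) = -(z (l + 2) - z (l + 1)) by abel, map_neg, map_neg] at h₁
    have : β (y (l + 2) - y (l + 1)) Δ ≤ 0 := by
      rw [map_sub, LinearMap.sub_apply]; linarith
    rwa [hy, map_smul, LinearMap.smul_apply, smul_eq_mul, hsymm.eq] at this
  -- the saddle inequality at the new iterate, plus optimality of both steps tested at the saddle
  have hkey : 0 ≤ - β r (y (l + 2) - ys) - ρ * β Δ b := by
    have h₁ := hz zs
    rw [show zs - z (l + 2) = -(z (l + 2) - zs) by abel, map_neg, map_neg] at h₁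
    rw [hAxs, map_sub, map_sub, LinearMap.sub_apply, LinearMap.sub_apply] at hx
    simp only [map_smul, LinearMap.smul_apply, smul_eq_mul] at hx
    rw [hsymm.eq r, map_sub, LinearMap.sub_apply]
    linarith
  have hmain : β (y (l + 2) - ys) (y (l + 2) - ys) + ρ ^ 2 * (β b b + β Δ Δ)
      ≤ β (y (l + 1) - ys) (y (l + 1) - ys)
        + ρ ^ 2 * β (B (z (l + 1) - zs)) (B (z (l + 1) - zs)) := by
    nlinarith [hβ.isNonneg.nonneg r]
  have hscale (t : ℝ) : (2 * ρ)⁻¹ * (ρ ^ 2 * t) = ρ / 2 * t := by field_simp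
  have := mul_le_mul_of_nonneg_left hmain (by positivity : 0 ≤ (2 * ρ)⁻¹)
  simp only [mul_add, hscale] at this
  linarith

theorem tendsto_apply_sub (h : IsADMMSeq β ρ f g A B x z y) (hf : ConvexOn ℝ Set.univ f)
    (hg : ConvexOn ℝ Set.univ g) (hβ : β.IsPosSemidef) (hρ : 0 < ρ) {xs : X} {zs : Z} {ys : W}
    (hs : IsSaddlePoint β f g A B xs zs ys) :
    Tendsto (fun l => β (B (z (l + 1) - z l)) (B (z (l + 1) - z l))) atTop (𝓝 0) := by
  have hnonneg := hβ.isNonneg.nonneg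
  have hlim := tendsto_zero_of_add_le_of_nonneg
    (V := fun l => admmEnergy β ρ B ys zs (y (l + 1)) (z (l + 1)))
    (fun l => by
      have := hnonneg (y (l + 1) - ys)
      have := hnonneg (B (z (l + 1) - zs))
      unfold admmEnergy; positivity)
    (fun l => mul_nonneg (by positivity) (hnonneg _)) (h.admmEnergy_add_le hf hg hβ hρ hs)
  rw [← tendsto_add_atTop_iff_nat 1]
  have := hlim.const_mul (2 / ρ)
  rw [mul_zero] at this
  refine this.congr fun l => ?_
  field_simp

end IsADMMSeq

end ADMM

section ChainSums

variable {M : Type*} [AddCommMonoid M]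

theorem sum_Icc_one_two_mul (a : ℕ → M) (r : ℕ) :
    ∑ k ∈ Icc 1 (2 * r), a k = ∑ i ∈ range r, (a (2 * i + 1) + a (2 * i + 2)) := by
  induction r with
  | zero => simp
  | succ r ih =>
    rw [show 2 * (r + 1) = 2 * r + 1 + 1 by ring, sum_Icc_succ_top (by omega),
      sum_Icc_succ_top (by omega), ih, sum_range_succ, add_assoc]

theorem sum_Icc_one_two_mul_sub_one (b : ℕ → M) (r : ℕ) :
    ∑ e ∈ Icc 1 (2 * r - 1), b e
      = ∑ i ∈ range r, ((if i = 0 then 0 else b (2 * i)) + b (2 * i + 1)) := by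
  induction r with
  | zero => simp
  | succ r ih =>
    rw [sum_range_succ, ← ih, show 2 * (r + 1) - 1 = 2 * r + 1 by omega,
      sum_Icc_succ_top (by omega)]
    rcases Nat.eq_zero_or_pos r with rfl | hr
    · simp
    · rw [if_neg hr.ne', show 2 * r = 2 * r - 1 + 1 by omega, sum_Icc_succ_top (by omega),
        show 2 * r - 1 + 1 = 2 * r by omega, add_assoc]

theorem sum_range_ite_zero_eq (b : ℕ → M) (r : ℕ) :
    ∑ i ∈ range r, (if i = 0 then 0 else b (2 * i))
      = ∑ i ∈ range r, (if i + 1 = r then 0 else b (2 * i + 2)) := by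
  cases r with
  | zero => simp
  | succ r =>
    rw [sum_range_succ', sum_range_succ, if_pos rfl, if_pos rfl]
    congr 1
    refine sum_congr rfl fun i hi => ?_
    rw [if_neg (Nat.succ_ne_zero i), if_neg (by simp at hi; omega), mul_add, mul_one]

theorem chain_sum_eq_odd (a b : ℕ → M) (r : ℕ) :
    ∑ k ∈ Icc 1 (2 * r), a k + ∑ e ∈ Icc 1 (2 * r - 1), b e
      = ∑ i ∈ range r, (a (2 * i + 1) + (if i = 0 then 0 else b (2 * i)) + b (2 * i + 1))
        + ∑ i ∈ range r, a (2 * i + 2) := by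
  rw [sum_Icc_one_two_mul, sum_Icc_one_two_mul_sub_one]
  simp only [sum_add_distrib]
  abel

theorem chain_sum_eq_even (a b : ℕ → M) (r : ℕ) :
    ∑ k ∈ Icc 1 (2 * r), a k + ∑ e ∈ Icc 1 (2 * r - 1), b e
      = ∑ i ∈ range r, (a (2 * i + 2) + b (2 * i + 1) + (if i + 1 = r then 0 else b (2 * i + 2)))
        + ∑ i ∈ range r, a (2 * i + 1) := by
  rw [sum_Icc_one_two_mul, sum_Icc_one_two_mul_sub_one]
  simp only [sum_add_distrib]
  rw [sum_range_ite_zero_eq]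
  abel

end ChainSums

section Parity

variable {E : Type*}

def interleave (x z : ℕ → E) (k : ℕ) : E := if Odd k then x k else z k

theorem interleave_of_odd {x z : ℕ → E} {k : ℕ} (hk : Odd k) : interleave x z k = x k := if_pos hk

theorem interleave_of_not_odd {x z : ℕ → E} {k : ℕ} (hk : ¬Odd k) : interleave x z k = z k :=
  if_neg hk

theorem interleave_self (x : ℕ → E) : interleave x x = x := funext fun _ => ite_self _

variable (K : ℕ) (Q : ℕ → E → ℝ)

def oddObjective (x : ℕ → E) : ℝ := ∑ k ∈ Icc 1 K with Odd k, Q k (x k)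

def evenObjective (z : ℕ → E) : ℝ := ∑ k ∈ Icc 1 K with ¬Odd k, Q k (z k)

theorem oddObjective_add_evenObjective (x z : ℕ → E) :
    oddObjective K Q x + evenObjective K Q z = ∑ k ∈ Icc 1 K, Q k (interleave x z k) := by
  rw [← sum_filter_add_sum_filter_not (Icc 1 K) Odd, oddObjective, evenObjective]
  congr 1 <;> refine sum_congr rfl fun k hk => ?_
  · rw [interleave_of_odd (mem_filter.mp hk).2]
  · rw [interleave_of_not_odd (mem_filter.mp hk).2]

variable [AddCommGroup E] [Module ℝ E] {K Q}

theorem convexOn_oddObjective (hQ : ∀ k ∈ Icc 1 K, ConvexOn ℝ Set.univ (Q k)) :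
    ConvexOn ℝ Set.univ (oddObjective K Q) :=
  convexOn_finsetSum fun k hk =>
    (hQ k (mem_filter.mp hk).1).comp_linearMap (LinearMap.proj (R := ℝ) (φ := fun _ : ℕ => E) k)

theorem convexOn_evenObjective (hQ : ∀ k ∈ Icc 1 K, ConvexOn ℝ Set.univ (Q k)) :
    ConvexOn ℝ Set.univ (evenObjective K Q) :=
  convexOn_finsetSum fun k hk =>
    (hQ k (mem_filter.mp hk).1).comp_linearMap (LinearMap.proj (R := ℝ) (φ := fun _ : ℕ => E) k)

variable (E)

def oddPart : (ℕ → E) →ₗ[ℝ] (ℕ → E) :=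
  LinearMap.pi fun k => if Odd k then LinearMap.proj k else 0

def evenPart : (ℕ → E) →ₗ[ℝ] (ℕ → E) :=
  LinearMap.pi fun k => if Odd k then 0 else LinearMap.proj k

variable {E}

theorem oddPart_add_evenPart (x z : ℕ → E) : oddPart E x + evenPart E z = interleave x z := by
  ext k
  by_cases hk : Odd k <;> simp [oddPart, evenPart, interleave, hk]

theorem evenPart_apply (z : ℕ → E) (k : ℕ) : evenPart E z k = if Odd k then 0 else z k := by
  by_cases hk : Odd k <;> simp [evenPart, hk]

end Parity

section Chain

variable {E : Type*} [NormedAddCommGroup E] [InnerProductSpace ℝ E] (K : ℕ)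

variable (E) in
/-- Multipliers of the node constraints `⟪C, ζ k⟫ = 0` (`k ∈ [1, K]`) and of the edge
constraints `ζ e = ζ (e + 1)` (`e ∈ [1, K - 1]`). -/
abbrev ChainMultiplier := (Icc 1 K → ℝ) × (Icc 1 (K - 1) → E)

variable (E) in
def chainForm : LinearMap.BilinForm ℝ (ChainMultiplier E K) :=
  LinearMap.mk₂ ℝ (fun w w' => ∑ k, w.1 k * w'.1 k + ∑ e, ⟪w.2 e, w'.2 e⟫)
    (fun _ _ _ => by
      simp only [Prod.fst_add, Prod.snd_add, Pi.add_apply, add_mul, inner_add_left,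
        sum_add_distrib]
      ring)
    (fun _ _ _ => by
      simp only [Prod.smul_fst, Prod.smul_snd, Pi.smul_apply, smul_eq_mul, real_inner_smul_left,
        mul_assoc, ← mul_sum, mul_add])
    (fun _ _ _ => by
      simp only [Prod.fst_add, Prod.snd_add, Pi.add_apply, mul_add, inner_add_right,
        sum_add_distrib]
      ring)
    (fun _ _ _ => by
      simp only [Prod.smul_fst, Prod.smul_snd, Pi.smul_apply, smul_eq_mul, real_inner_smul_right,
        mul_left_comm _ (_ : ℝ), ← mul_sum, mul_add])

theorem chainForm_apply (w w' : ChainMultiplier E K) :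
    chainForm E K w w' = ∑ k, w.1 k * w'.1 k + ∑ e, ⟪w.2 e, w'.2 e⟫ := rfl

theorem chainForm_isPosSemidef : (chainForm E K).IsPosSemidef where
  isSymm := ⟨fun w w' => by simp only [chainForm_apply, mul_comm, real_inner_comm]⟩
  isNonneg := ⟨fun w => by
    rw [chainForm_apply]
    exact add_nonneg (sum_nonneg fun _ _ => mul_self_nonneg _)
      (sum_nonneg fun _ _ => real_inner_self_nonneg)⟩

def chainConstraint (C : E) : (ℕ → E) →ₗ[ℝ] ChainMultiplier E K :=
  (LinearMap.pi fun k : Icc 1 K => innerₛₗ ℝ C ∘ₗ LinearMap.proj k.1).prod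
    (LinearMap.pi fun e : Icc 1 (K - 1) =>
      LinearMap.proj (R := ℝ) (φ := fun _ => E) e.1 - LinearMap.proj (e.1 + 1))

theorem chainConstraint_apply (C : E) (ξ : ℕ → E) :
    chainConstraint K C ξ
      = (fun k : Icc 1 K => ⟪C, ξ k⟫, fun e : Icc 1 (K - 1) => ξ e - ξ (e + 1)) :=
  rfl

def chainMultiplier (μ : ℕ → ℝ) (γ : ℕ → E) : ChainMultiplier E K :=
  (fun k => μ k, fun e => γ e)

def chainLagrangian (Q : ℕ → E → ℝ) (C : E) (ρ : ℝ) (μ : ℕ → ℝ) (γ : ℕ → E) (ξ : ℕ → E) : ℝ :=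
  ∑ k ∈ Icc 1 K, (Q k (ξ k) + μ k * ⟪C, ξ k⟫ + ρ / 2 * ⟪C, ξ k⟫ ^ 2)
    + ∑ e ∈ Icc 1 (K - 1), (⟪γ e, ξ e - ξ (e + 1)⟫ + ρ / 2 * ‖ξ e - ξ (e + 1)‖ ^ 2)

theorem chainForm_chainMultiplier_chainConstraint (C : E) (μ : ℕ → ℝ) (γ ξ : ℕ → E) :
    chainForm E K (chainMultiplier K μ γ) (chainConstraint K C ξ)
      = ∑ k ∈ Icc 1 K, μ k * ⟪C, ξ k⟫ + ∑ e ∈ Icc 1 (K - 1), ⟪γ e, ξ e - ξ (e + 1)⟫ :=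
  congrArg₂ (· + ·) (sum_coe_sort _ fun k => μ k * ⟪C, ξ k⟫)
    (sum_coe_sort _ fun e => ⟪γ e, ξ e - ξ (e + 1)⟫)

theorem chainForm_chainConstraint_self (C : E) (ξ : ℕ → E) :
    chainForm E K (chainConstraint K C ξ) (chainConstraint K C ξ)
      = ∑ k ∈ Icc 1 K, ⟪C, ξ k⟫ ^ 2 + ∑ e ∈ Icc 1 (K - 1), ‖ξ e - ξ (e + 1)‖ ^ 2 := by
  simp only [sq, ← real_inner_self_eq_norm_mul_norm]
  exact congrArg₂ (· + ·) (sum_coe_sort _ fun k => ⟪C, ξ k⟫ * ⟪C, ξ k⟫)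
    (sum_coe_sort _ fun e => ⟪ξ e - ξ (e + 1), ξ e - ξ (e + 1)⟫)

theorem augLagrangian_chain (Q : ℕ → E → ℝ) (C : E) (ρ : ℝ) (μ : ℕ → ℝ) (γ : ℕ → E)
    (x z : ℕ → E) :
    augLagrangian (chainForm E K) ρ (oddObjective K Q) (evenObjective K Q)
        (chainConstraint K C ∘ₗ oddPart E) (chainConstraint K C ∘ₗ evenPart E) x z
        (chainMultiplier K μ γ)
      = chainLagrangian K Q C ρ μ γ (interleave x z) := by
  rw [augLagrangian, LinearMap.comp_apply, LinearMap.comp_apply, ← map_add,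
    oddPart_add_evenPart, oddObjective_add_evenObjective,
    chainForm_chainMultiplier_chainConstraint, chainForm_chainConstraint_self, chainLagrangian]
  simp only [sum_add_distrib, mul_add, mul_sum]
  ring

variable {K}

theorem norm_sq_le_chainForm_evenPart (C : E) (ξ : ℕ → E) {k : ℕ} (hk : Even k) (hk₀ : 0 < k)
    (hkK : k ≤ K) :
    ‖ξ k‖ ^ 2 ≤ chainForm E K (chainConstraint K C (evenPart E ξ))
      (chainConstraint K C (evenPart E ξ)) := by
  have hedge : k - 1 ∈ Icc 1 (K - 1) := mem_Icc.mpr ⟨by grind, by omega⟩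
  have hodd : Odd (k - 1) := Nat.Even.sub_odd hk₀ hk odd_one
  rw [chainForm_chainConstraint_self]
  calc ‖ξ k‖ ^ 2 = ‖evenPart E ξ (k - 1) - evenPart E ξ (k - 1 + 1)‖ ^ 2 := by
        rw [evenPart_apply, evenPart_apply, if_pos hodd, Nat.sub_add_cancel hk₀,
          if_neg (Nat.not_odd_iff_even.mpr hk), zero_sub, norm_neg]
    _ ≤ ∑ e ∈ Icc 1 (K - 1), ‖evenPart E ξ e - evenPart E ξ (e + 1)‖ ^ 2 :=
        single_le_sum (f := fun e => ‖evenPart E ξ e - evenPart E ξ (e + 1)‖ ^ 2)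
          (fun _ _ => sq_nonneg _) hedge
    _ ≤ _ := le_add_of_nonneg_left (sum_nonneg fun _ _ => sq_nonneg _)

theorem tendsto_sub_of_tendsto_chainForm_evenPart {C : E} {ζ : ℕ → ℕ → E}
    (h : Tendsto (fun l => chainForm E K ((chainConstraint K C ∘ₗ evenPart E) (ζ (l + 1) - ζ l))
      ((chainConstraint K C ∘ₗ evenPart E) (ζ (l + 1) - ζ l))) atTop (𝓝 0))
    {j : ℕ} (hj : Even j) (hj₀ : 0 < j) (hjK : j ≤ K) :
    Tendsto (fun l => ζ (l + 1) j - ζ l j) atTop (𝓝 0) :=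
  squeeze_zero_norm (fun l => by
      rw [← abs_norm]
      exact Real.abs_le_sqrt (norm_sq_le_chainForm_evenPart C (ζ (l + 1) - ζ l) hj hj₀ hjK))
    (Real.sqrt_zero ▸ h.sqrt)

variable {Q : ℕ → E → ℝ} {C : E} {ρ : ℝ} {μ : ℕ → ℝ} {γ : ℕ → E}

theorem chainLagrangian_interleave_le_odd (hK : Even K) {ζ ζ' : ℕ → E}
    (h₁ : ∀ z : E,
      Q 1 (ζ' 1) + μ 1 * ⟪C, ζ' 1⟫ + ρ / 2 * ⟪C, ζ' 1⟫ ^ 2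
          + ⟪γ 1, ζ' 1 - ζ 2⟫ + ρ / 2 * ‖ζ' 1 - ζ 2‖ ^ 2
        ≤ Q 1 z + μ 1 * ⟪C, z⟫ + ρ / 2 * ⟪C, z⟫ ^ 2
          + ⟪γ 1, z - ζ 2⟫ + ρ / 2 * ‖z - ζ 2‖ ^ 2)
    (hodd : ∀ k, Odd k → 1 < k → k < K → ∀ z : E,
      Q k (ζ' k) + μ k * ⟪C, ζ' k⟫ + ρ / 2 * ⟪C, ζ' k⟫ ^ 2
          + ⟪γ (k - 1), ζ (k - 1) - ζ' k⟫ + ⟪γ k, ζ' k - ζ (k + 1)⟫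
          + ρ / 2 * ‖ζ (k - 1) - ζ' k‖ ^ 2 + ρ / 2 * ‖ζ' k - ζ (k + 1)‖ ^ 2
        ≤ Q k z + μ k * ⟪C, z⟫ + ρ / 2 * ⟪C, z⟫ ^ 2
          + ⟪γ (k - 1), ζ (k - 1) - z⟫ + ⟪γ k, z - ζ (k + 1)⟫
          + ρ / 2 * ‖ζ (k - 1) - z‖ ^ 2 + ρ / 2 * ‖z - ζ (k + 1)‖ ^ 2)
    (x : ℕ → E) :
    chainLagrangian K Q C ρ μ γ (interleave ζ' ζ)
      ≤ chainLagrangian K Q C ρ μ γ (interleave x ζ) := by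
  obtain ⟨r, rfl⟩ := hK
  rw [← two_mul] at hodd ⊢
  rw [chainLagrangian, chainLagrangian, chain_sum_eq_odd, chain_sum_eq_odd]
  refine add_le_add (sum_le_sum fun i hi => ?_) (sum_congr rfl fun i _ => ?_).le
  · have hir := mem_range.mp hi
    simp only [interleave, Nat.odd_add_one, Nat.odd_mul]
    rcases Nat.eq_zero_or_pos i with rfl | hi₀
    · simp only [mul_zero, zero_add, Nat.not_odd_zero, not_false_eq_true, not_true_eq_false,
        and_self, ↓reduceIte, add_zero, Nat.reduceAdd]
      linarith [h₁ (x 1)]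
    · have := hodd (2 * i + 1) (odd_two_mul_add_one i) (by omega) (by omega) (x (2 * i + 1))
      simp only [Nat.add_sub_cancel] at this
      simp only [Nat.not_odd_zero, not_false_eq_true, not_true_eq_false, false_and, ↓reduceIte,
        hi₀.ne']
      linarith
  · simp [interleave, Nat.odd_add_one]

theorem chainLagrangian_interleave_le_even (hK : Even K) {ζ' : ℕ → E}
    (heven : ∀ k, Even k → 0 < k → k < K → ∀ z : E,
      Q k (ζ' k) + μ k * ⟪C, ζ' k⟫ + ρ / 2 * ⟪C, ζ' k⟫ ^ 2
          + ⟪γ (k - 1), ζ' (k - 1) - ζ' k⟫ + ⟪γ k, ζ' k - ζ' (k + 1)⟫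
          + ρ / 2 * ‖ζ' (k - 1) - ζ' k‖ ^ 2 + ρ / 2 * ‖ζ' k - ζ' (k + 1)‖ ^ 2
        ≤ Q k z + μ k * ⟪C, z⟫ + ρ / 2 * ⟪C, z⟫ ^ 2
          + ⟪γ (k - 1), ζ' (k - 1) - z⟫ + ⟪γ k, z - ζ' (k + 1)⟫
          + ρ / 2 * ‖ζ' (k - 1) - z‖ ^ 2 + ρ / 2 * ‖z - ζ' (k + 1)‖ ^ 2)
    (hlast : ∀ z : E,
      Q K (ζ' K) + μ K * ⟪C, ζ' K⟫ + ρ / 2 * ⟪C, ζ' K⟫ ^ 2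
          + ⟪γ (K - 1), ζ' (K - 1) - ζ' K⟫ + ρ / 2 * ‖ζ' (K - 1) - ζ' K‖ ^ 2
        ≤ Q K z + μ K * ⟪C, z⟫ + ρ / 2 * ⟪C, z⟫ ^ 2
          + ⟪γ (K - 1), ζ' (K - 1) - z⟫ + ρ / 2 * ‖ζ' (K - 1) - z‖ ^ 2)
    (z : ℕ → E) :
    chainLagrangian K Q C ρ μ γ (interleave ζ' ζ')
      ≤ chainLagrangian K Q C ρ μ γ (interleave ζ' z) := by
  obtain ⟨r, rfl⟩ := hK
  rw [← two_mul] at heven hlast ⊢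
  rw [chainLagrangian, chainLagrangian, chain_sum_eq_even, chain_sum_eq_even]
  refine add_le_add (sum_le_sum fun i hi => ?_) (sum_congr rfl fun i _ => ?_).le
  · have hir := mem_range.mp hi
    simp only [interleave, Nat.odd_add_one, Nat.odd_mul, ite_self]
    by_cases hi_last : i + 1 = r
    · subst hi_last
      have := hlast (z (2 * i + 2))
      rw [show 2 * (i + 1) = 2 * i + 2 by ring] at this
      simp only [show 2 * i + 2 - 1 = 2 * i + 1 from rfl] at this
      simp only [↓reduceIte, add_zero, Nat.not_odd_zero, not_false_eq_true, not_true_eq_false,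
        false_and]
      linarith
    · have := heven (2 * i + 2) ⟨i + 1, by ring⟩ (by omega) (by omega) (z (2 * i + 2))
      simp only [show 2 * i + 2 - 1 = 2 * i + 1 from rfl] at this
      simp only [hi_last, ↓reduceIte, Nat.not_odd_zero, not_false_eq_true, not_true_eq_false,
        false_and]
      linarith
  · simp [interleave]

theorem chainMultiplier_eq_add_smul {μ' : ℕ → ℝ} {γ' ξ : ℕ → E}
    (hμ : ∀ k ∈ Icc 1 K, μ' k = μ k + ρ * ⟪C, ξ k⟫)
    (hγ : ∀ e ∈ Icc 1 (K - 1), γ' e = γ e + ρ • (ξ e - ξ (e + 1))) :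
    chainMultiplier K μ' γ' = chainMultiplier K μ γ + ρ • chainConstraint K C ξ :=
  Prod.ext (funext fun k => hμ k k.2) (funext fun e => hγ e e.2)

theorem isSaddlePoint_chain {ζs : E} {μs : ℕ → ℝ} {γs : ℕ → E} (hCζs : ⟪C, ζs⟫ = 0)
    (hsaddle : ∀ zf : ℕ → E,
      ∑ k ∈ Icc 1 K, Q k ζs + ∑ k ∈ Icc 1 K, μs k * ⟪C, ζs⟫ + ∑ k ∈ Icc 1 (K - 1), ⟪γs k, ζs - ζs⟫
        ≤ ∑ k ∈ Icc 1 K, Q k (zf k) + ∑ k ∈ Icc 1 K, μs k * ⟪C, zf k⟫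
          + ∑ k ∈ Icc 1 (K - 1), ⟪γs k, zf k - zf (k + 1)⟫) :
    IsSaddlePoint (chainForm E K) (oddObjective K Q) (evenObjective K Q)
      (chainConstraint K C ∘ₗ oddPart E) (chainConstraint K C ∘ₗ evenPart E)
      (fun _ => ζs) (fun _ => ζs) (chainMultiplier K μs γs) where
  feasible := by
    rw [LinearMap.comp_apply, LinearMap.comp_apply, ← map_add, oddPart_add_evenPart,
      interleave_self, chainConstraint_apply]
    ext <;> simp [hCζs]
  le_lagrangian x z := by
    rw [LinearMap.comp_apply, LinearMap.comp_apply, ← map_add, oddPart_add_evenPart,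
      oddObjective_add_evenObjective, oddObjective_add_evenObjective, interleave_self,
      chainForm_chainMultiplier_chainConstraint]
    simpa [hCζs, add_assoc] using hsaddle (interleave x z)

end Chain

theorem dsgcdmm_dual_residual_tendsto_zero_general
    (d K : ℕ) (hKeven : Even K)
    (n : ℕ → ℕ)
    (y : ∀ k, EuclideanSpace ℝ (Fin (n k)))
    (P : ∀ k, Matrix (Fin (n k)) (Fin d) ℝ)
    (lam : ℝ) (hlam : 0 ≤ lam)
    (ω : ℕ → Fin d → ℝ) (hω : ∀ k ∈ Icc 1 K, ∀ j, 0 ≤ ω k j)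
    (C : EuclideanSpace ℝ (Fin d))
    (Q : ℕ → EuclideanSpace ℝ (Fin d) → ℝ)
    (hQ : ∀ k, ∀ x : EuclideanSpace ℝ (Fin d), Q k x =
      (1 / (2 * (n k : ℝ))) * ‖y k - (P k).toEuclideanLin x‖ ^ 2
        + lam * ∑ j, ω k j * |x j|)
    (ρ : ℝ) (hρ : 0 < ρ)
    (ζ : ℕ → ℕ → EuclideanSpace ℝ (Fin d))
    (μ : ℕ → ℕ → ℝ)
    (γ : ℕ → ℕ → EuclideanSpace ℝ (Fin d))
    (hdyn1 : ∀ l : ℕ, ∀ z : EuclideanSpace ℝ (Fin d),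
      Q 1 (ζ (l+1) 1) + μ l 1 * ⟪C, ζ (l+1) 1⟫ + (ρ/2) * ⟪C, ζ (l+1) 1⟫ ^ 2
          + ⟪γ l 1, ζ (l+1) 1 - ζ l 2⟫ + (ρ/2) * ‖ζ (l+1) 1 - ζ l 2‖ ^ 2
        ≤ Q 1 z + μ l 1 * ⟪C, z⟫ + (ρ/2) * ⟪C, z⟫ ^ 2
          + ⟪γ l 1, z - ζ l 2⟫ + (ρ/2) * ‖z - ζ l 2‖ ^ 2)
    (hdynodd : ∀ l : ℕ, ∀ k, Odd k → 1 < k → k < K → ∀ z : EuclideanSpace ℝ (Fin d),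
      Q k (ζ (l+1) k) + μ l k * ⟪C, ζ (l+1) k⟫ + (ρ/2) * ⟪C, ζ (l+1) k⟫ ^ 2
          + ⟪γ l (k-1), ζ l (k-1) - ζ (l+1) k⟫ + ⟪γ l k, ζ (l+1) k - ζ l (k+1)⟫
          + (ρ/2) * ‖ζ l (k-1) - ζ (l+1) k‖ ^ 2 + (ρ/2) * ‖ζ (l+1) k - ζ l (k+1)‖ ^ 2
        ≤ Q k z + μ l k * ⟪C, z⟫ + (ρ/2) * ⟪C, z⟫ ^ 2
          + ⟪γ l (k-1), ζ l (k-1) - z⟫ + ⟪γ l k, z - ζ l (k+1)⟫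
          + (ρ/2) * ‖ζ l (k-1) - z‖ ^ 2 + (ρ/2) * ‖z - ζ l (k+1)‖ ^ 2)
    (hdyneven : ∀ l : ℕ, ∀ k, Even k → 0 < k → k < K → ∀ z : EuclideanSpace ℝ (Fin d),
      Q k (ζ (l+1) k) + μ l k * ⟪C, ζ (l+1) k⟫ + (ρ/2) * ⟪C, ζ (l+1) k⟫ ^ 2
          + ⟪γ l (k-1), ζ (l+1) (k-1) - ζ (l+1) k⟫ + ⟪γ l k, ζ (l+1) k - ζ (l+1) (k+1)⟫
          + (ρ/2) * ‖ζ (l+1) (k-1) - ζ (l+1) k‖ ^ 2 + (ρ/2) * ‖ζ (l+1) k - ζ (l+1) (k+1)‖ ^ 2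
        ≤ Q k z + μ l k * ⟪C, z⟫ + (ρ/2) * ⟪C, z⟫ ^ 2
          + ⟪γ l (k-1), ζ (l+1) (k-1) - z⟫ + ⟪γ l k, z - ζ (l+1) (k+1)⟫
          + (ρ/2) * ‖ζ (l+1) (k-1) - z‖ ^ 2 + (ρ/2) * ‖z - ζ (l+1) (k+1)‖ ^ 2)
    (hdynK : ∀ l : ℕ, ∀ z : EuclideanSpace ℝ (Fin d),
      Q K (ζ (l+1) K) + μ l K * ⟪C, ζ (l+1) K⟫ + (ρ/2) * ⟪C, ζ (l+1) K⟫ ^ 2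
          + ⟪γ l (K-1), ζ (l+1) (K-1) - ζ (l+1) K⟫ + (ρ/2) * ‖ζ (l+1) (K-1) - ζ (l+1) K‖ ^ 2
        ≤ Q K z + μ l K * ⟪C, z⟫ + (ρ/2) * ⟪C, z⟫ ^ 2
          + ⟪γ l (K-1), ζ (l+1) (K-1) - z⟫ + (ρ/2) * ‖ζ (l+1) (K-1) - z‖ ^ 2)
    (hμ : ∀ l : ℕ, ∀ k ∈ Icc 1 K, μ (l+1) k = μ l k + ρ * ⟪C, ζ (l+1) k⟫)
    (hγ : ∀ l : ℕ, ∀ k ∈ Icc 1 (K-1),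
      γ (l+1) k = γ l k + ρ • (ζ (l+1) k - ζ (l+1) (k+1)))
    (ζs : EuclideanSpace ℝ (Fin d)) (μs : ℕ → ℝ) (γs : ℕ → EuclideanSpace ℝ (Fin d))
    (hCζs : ⟪C, ζs⟫ = 0)
    (hsaddle : ∀ zf : ℕ → EuclideanSpace ℝ (Fin d),
      (∑ k ∈ Icc 1 K, Q k ζs) + (∑ k ∈ Icc 1 K, μs k * ⟪C, ζs⟫)
          + (∑ k ∈ Icc 1 (K-1), ⟪γs k, ζs - ζs⟫)
        ≤ (∑ k ∈ Icc 1 K, Q k (zf k)) + (∑ k ∈ Icc 1 K, μs k * ⟪C, zf k⟫)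
          + (∑ k ∈ Icc 1 (K-1), ⟪γs k, zf k - zf (k+1)⟫))
    :
    ∀ k ∈ Icc 1 K, Odd k →
      Tendsto (fun l : ℕ =>
          if k = 1 then ρ • (ζ (l+1) 2 - ζ l 2)
          else ρ • (ζ (l+1) (k-1) - ζ l (k-1)) + ρ • (ζ (l+1) (k+1) - ζ l (k+1)))
        atTop (nhds (0 : EuclideanSpace ℝ (Fin d))) := by
  have hconvQ (k : ℕ) (hk : k ∈ Icc 1 K) : ConvexOn ℝ Set.univ (Q k) := by
    rw [funext (hQ k)]
    exact convexOn_lasso (by positivity) hlam (y k) (P k).toEuclideanLin (hω k hk)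
  have hadmm : IsADMMSeq (chainForm _ K) ρ (oddObjective K Q) (evenObjective K Q)
      (chainConstraint K C ∘ₗ oddPart _) (chainConstraint K C ∘ₗ evenPart _) ζ ζ
      (fun l => chainMultiplier K (μ l) (γ l)) := by
    refine ⟨fun l => isMinOn_univ_iff.mpr fun x => ?_, fun l => isMinOn_univ_iff.mpr fun z => ?_,
      fun l => ?_⟩
    · simpa only [augLagrangian_chain] using
        chainLagrangian_interleave_le_odd hKeven (hdyn1 l) (hdynodd l) x
    · simpa only [augLagrangian_chain] using
        chainLagrangian_interleave_le_even hKeven (hdyneven l) (hdynK l) z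
    · rw [LinearMap.comp_apply, LinearMap.comp_apply, ← map_add, oddPart_add_evenPart,
        interleave_self]
      exact chainMultiplier_eq_add_smul (hμ l) (hγ l)
  have hlim := hadmm.tendsto_apply_sub (convexOn_oddObjective hconvQ)
    (convexOn_evenObjective hconvQ) (chainForm_isPosSemidef K) hρ (isSaddlePoint_chain hCζs hsaddle)
  have hincr (j : ℕ) (hj : Even j) (hj₀ : 0 < j) (hjK : j ≤ K) :=
    tendsto_sub_of_tendsto_chainForm_evenPart hlim hj hj₀ hjK
  intro k hk hk_odd
  obtain ⟨hk₁, hkK⟩ := mem_Icc.mp hk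
  have hk' := Nat.odd_iff.mp hk_odd
  have hK' := Nat.even_iff.mp hKeven
  split_ifs with h₁
  · simpa using (hincr 2 even_two two_pos (by omega)).const_smul ρ
  · have hprev := hincr (k - 1) (Nat.even_iff.mpr (by omega)) (by omega) (by omega)
    have hnext := hincr (k + 1) (Nat.even_iff.mpr (by omega)) (by omega) (by omega)
    simpa using (hprev.const_smul ρ).add (hnext.const_smul ρ)

/-- Theorem 1, part 3: the dual residual of every head machine converges to zero. -/
theorem dsgcdmm_dual_residual_tendsto_zero
    (d K : ℕ) (hd : 1 ≤ d) (hK : 2 ≤ K) (hKeven : Even K)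
    (n : ℕ → ℕ) (hn : ∀ k ∈ Icc 1 K, 1 ≤ n k)
    (y : ∀ k, EuclideanSpace ℝ (Fin (n k)))
    (P : ∀ k, Matrix (Fin (n k)) (Fin d) ℝ)
    (lam : ℝ) (hlam : 0 ≤ lam)
    (ω : ℕ → Fin d → ℝ) (hω : ∀ k ∈ Icc 1 K, ∀ j, 0 ≤ ω k j)
    (C : EuclideanSpace ℝ (Fin d))
    (Q : ℕ → EuclideanSpace ℝ (Fin d) → ℝ)
    (hQ : ∀ k, ∀ x : EuclideanSpace ℝ (Fin d), Q k x =
      (1 / (2 * (n k : ℝ))) * ‖y k - (P k).toEuclideanLin x‖ ^ 2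
        + lam * ∑ j, ω k j * |x j|)
    (ρ : ℝ) (hρ : 0 < ρ)
    (ζ : ℕ → ℕ → EuclideanSpace ℝ (Fin d))
    (μ : ℕ → ℕ → ℝ)
    (γ : ℕ → ℕ → EuclideanSpace ℝ (Fin d))
    (hdyn1 : ∀ l : ℕ, ∀ z : EuclideanSpace ℝ (Fin d),
      Q 1 (ζ (l+1) 1) + μ l 1 * ⟪C, ζ (l+1) 1⟫ + (ρ/2) * ⟪C, ζ (l+1) 1⟫ ^ 2
          + ⟪γ l 1, ζ (l+1) 1 - ζ l 2⟫ + (ρ/2) * ‖ζ (l+1) 1 - ζ l 2‖ ^ 2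
        ≤ Q 1 z + μ l 1 * ⟪C, z⟫ + (ρ/2) * ⟪C, z⟫ ^ 2
          + ⟪γ l 1, z - ζ l 2⟫ + (ρ/2) * ‖z - ζ l 2‖ ^ 2)
    (hdynodd : ∀ l : ℕ, ∀ k, Odd k → 1 < k → k < K → ∀ z : EuclideanSpace ℝ (Fin d),
      Q k (ζ (l+1) k) + μ l k * ⟪C, ζ (l+1) k⟫ + (ρ/2) * ⟪C, ζ (l+1) k⟫ ^ 2
          + ⟪γ l (k-1), ζ l (k-1) - ζ (l+1) k⟫ + ⟪γ l k, ζ (l+1) k - ζ l (k+1)⟫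
          + (ρ/2) * ‖ζ l (k-1) - ζ (l+1) k‖ ^ 2 + (ρ/2) * ‖ζ (l+1) k - ζ l (k+1)‖ ^ 2
        ≤ Q k z + μ l k * ⟪C, z⟫ + (ρ/2) * ⟪C, z⟫ ^ 2
          + ⟪γ l (k-1), ζ l (k-1) - z⟫ + ⟪γ l k, z - ζ l (k+1)⟫
          + (ρ/2) * ‖ζ l (k-1) - z‖ ^ 2 + (ρ/2) * ‖z - ζ l (k+1)‖ ^ 2)
    (hdyneven : ∀ l : ℕ, ∀ k, Even k → 0 < k → k < K → ∀ z : EuclideanSpace ℝ (Fin d),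
      Q k (ζ (l+1) k) + μ l k * ⟪C, ζ (l+1) k⟫ + (ρ/2) * ⟪C, ζ (l+1) k⟫ ^ 2
          + ⟪γ l (k-1), ζ (l+1) (k-1) - ζ (l+1) k⟫ + ⟪γ l k, ζ (l+1) k - ζ (l+1) (k+1)⟫
          + (ρ/2) * ‖ζ (l+1) (k-1) - ζ (l+1) k‖ ^ 2 + (ρ/2) * ‖ζ (l+1) k - ζ (l+1) (k+1)‖ ^ 2
        ≤ Q k z + μ l k * ⟪C, z⟫ + (ρ/2) * ⟪C, z⟫ ^ 2
          + ⟪γ l (k-1), ζ (l+1) (k-1) - z⟫ + ⟪γ l k, z - ζ (l+1) (k+1)⟫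
          + (ρ/2) * ‖ζ (l+1) (k-1) - z‖ ^ 2 + (ρ/2) * ‖z - ζ (l+1) (k+1)‖ ^ 2)
    (hdynK : ∀ l : ℕ, ∀ z : EuclideanSpace ℝ (Fin d),
      Q K (ζ (l+1) K) + μ l K * ⟪C, ζ (l+1) K⟫ + (ρ/2) * ⟪C, ζ (l+1) K⟫ ^ 2
          + ⟪γ l (K-1), ζ (l+1) (K-1) - ζ (l+1) K⟫ + (ρ/2) * ‖ζ (l+1) (K-1) - ζ (l+1) K‖ ^ 2
        ≤ Q K z + μ l K * ⟪C, z⟫ + (ρ/2) * ⟪C, z⟫ ^ 2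
          + ⟪γ l (K-1), ζ (l+1) (K-1) - z⟫ + (ρ/2) * ‖ζ (l+1) (K-1) - z‖ ^ 2)
    (hμ : ∀ l : ℕ, ∀ k ∈ Icc 1 K, μ (l+1) k = μ l k + ρ * ⟪C, ζ (l+1) k⟫)
    (hγ : ∀ l : ℕ, ∀ k ∈ Icc 1 (K-1),
      γ (l+1) k = γ l k + ρ • (ζ (l+1) k - ζ (l+1) (k+1)))
    (ζs : EuclideanSpace ℝ (Fin d)) (μs : ℕ → ℝ) (γs : ℕ → EuclideanSpace ℝ (Fin d))
    (hCζs : ⟪C, ζs⟫ = 0)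
    (hmin : ∀ z : EuclideanSpace ℝ (Fin d), ⟪C, z⟫ = 0 →
      ∑ k ∈ Icc 1 K, Q k ζs ≤ ∑ k ∈ Icc 1 K, Q k z)
    (hsaddle : ∀ zf : ℕ → EuclideanSpace ℝ (Fin d),
      (∑ k ∈ Icc 1 K, Q k ζs) + (∑ k ∈ Icc 1 K, μs k * ⟪C, ζs⟫)
          + (∑ k ∈ Icc 1 (K-1), ⟪γs k, ζs - ζs⟫)
        ≤ (∑ k ∈ Icc 1 K, Q k (zf k)) + (∑ k ∈ Icc 1 K, μs k * ⟪C, zf k⟫)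
          + (∑ k ∈ Icc 1 (K-1), ⟪γs k, zf k - zf (k+1)⟫))
    :
    ∀ k ∈ Icc 1 K, Odd k →
      Tendsto (fun l : ℕ =>
          if k = 1 then ρ • (ζ (l+1) 2 - ζ l 2)
          else ρ • (ζ (l+1) (k-1) - ζ l (k-1)) + ρ • (ζ (l+1) (k+1) - ζ l (k+1)))
        atTop (nhds (0 : EuclideanSpace ℝ (Fin d))) :=
  dsgcdmm_dual_residual_tendsto_zero_general d K hKeven n y P lam hlam ω hω C Q hQ ρ hρ ζ μ γ hdyn1
    hdynodd hdyneven hdynK hμ hγ ζs μs γs hCζs hsaddle
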